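/- arXiv:2404.05033 — 2 statements merged into one kernel-verified Lean document; each statement's English description precedes it below -/
import Mathlib

section
/- For any distinct i, j, k ∈ {1,2,3}, the subgroup of A generated by {mᵢ + eⱼ, mⱼ + eᵢ, mₖ} is a Lagrangian subgroup of (A, ω), and the subgroup generated by {m₁ + e₂ + e₃, m₂ + e₁ + e₃, m₃ + e₁ + e₂} is a Lagrangian subgroup of (A, ω); these are condensation groups of boundaries condensing composites of charges and fluxes. -/
/-!
Both subgroups are graphs `{(M b, b)}` of the adjacency matrix `M` of a graph on three
vertices (the single edge `ij`, resp. the triangle), i.e. images of the magnetic Lagrangian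
`{(0, b)}` under a shear. For symmetric `M` the graph is isotropic, as
`ω((M b, b), (M b', b')) = 2 (b · M b') = 0`, and an excitation `(a, b)` orthogonal to every
`(M δₜ, δₜ)` satisfies `a = M b` in characteristic two, so it lies in the graph.
-/

/-- The group of topological excitations of three copies of the 3D toric code:
pairs (a, b) of electric/magnetic labels in `(ZMod 2)³`. -/
abbrev A : Type := (Fin 3 → ZMod 2) × (Fin 3 → ZMod 2)

/-- The electric charge `eᵢ`. -/
def e (i : Fin 3) : A := (Pi.single i 1, 0)

/-- The magnetic flux `mᵢ`. -/
def m (i : Fin 3) : A := (0, Pi.single i 1)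

/-- The mutual-statistics pairing `ω((a,b),(a',b')) = a·b' + a'·b`. -/
def ω (x y : A) : ZMod 2 :=
  (∑ t, x.1 t * y.2 t) + (∑ t, y.1 t * x.2 t)

/-- The action of the S-domain wall `s⁽²⁾ᵢⱼ` on excitations:
`(a, b) ↦ (a + bⱼ•δᵢ + bᵢ•δⱼ, b)`. -/
def φ (i j : Fin 3) (x : A) : A :=
  (x.1 + x.2 j • (Pi.single i 1 : Fin 3 → ZMod 2) + x.2 i • (Pi.single j 1 : Fin 3 → ZMod 2), x.2)

/-- A subgroup `L` of `A` is Lagrangian if it equals its orthogonal complement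
with respect to the pairing `ω`. -/
def IsLagrangian (L : AddSubgroup A) : Prop :=
  (L : Set A) = {x : A | ∀ l ∈ L, ω x l = 0}

lemma ω_comm (x y : A) : ω x y = ω y x := add_comm _ _

lemma ω_add_right (x y z : A) : ω x (y + z) = ω x y + ω x z := by
  simp only [ω, Prod.fst_add, Prod.snd_add, Pi.add_apply, mul_add, add_mul,
    Finset.sum_add_distrib]
  ring

lemma ω_neg_right (x y : A) : ω x (-y) = -ω x y := by
  simp only [ω, Prod.fst_neg, Prod.snd_neg, Pi.neg_apply, mul_neg, neg_mul,
    Finset.sum_neg_distrib, neg_add]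

lemma ω_zero_right (x : A) : ω x 0 = 0 := by
  simp [ω]

lemma forall_mem_closure_ω_eq_zero_iff {S : Set A} {x : A} :
    (∀ l ∈ AddSubgroup.closure S, ω x l = 0) ↔ ∀ s ∈ S, ω x s = 0 := by
  refine ⟨fun h s hs => h s (AddSubgroup.subset_closure hs), fun h l hl => ?_⟩
  induction hl using AddSubgroup.closure_induction with
  | mem s hs => exact h s hs
  | zero => exact ω_zero_right x
  | add y z _ _ hy hz => rw [ω_add_right, hy, hz, add_zero]
  | neg y _ hy => rw [ω_neg_right, hy, neg_zero]

lemma isLagrangian_closure {S : Set A} (hiso : ∀ s ∈ S, ∀ t ∈ S, ω s t = 0)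
    (hcompl : ∀ x, (∀ s ∈ S, ω x s = 0) → x ∈ AddSubgroup.closure S) :
    IsLagrangian (AddSubgroup.closure S) := by
  ext x
  simp only [SetLike.mem_coe, Set.mem_ofPred_eq]
  rw [forall_mem_closure_ω_eq_zero_iff]
  refine ⟨fun hx s hs => ?_, hcompl x⟩
  rw [ω_comm]
  exact forall_mem_closure_ω_eq_zero_iff.mpr (hiso s hs) x hx

/-- The image of `mₜ` under the shear `(a, b) ↦ (a + M b, b)`. -/
def dressedFlux (M : Matrix (Fin 3) (Fin 3) (ZMod 2)) (t : Fin 3) : A :=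
  (fun s => M s t, Pi.single t 1)

lemma ω_dressedFlux (x : A) (M : Matrix (Fin 3) (Fin 3) (ZMod 2)) (t : Fin 3) :
    ω x (dressedFlux M t) = x.1 t + ∑ u, M u t * x.2 u := by
  simp [ω, dressedFlux, Pi.single_apply]

lemma isLagrangian_closure_range_dressedFlux {M : Matrix (Fin 3) (Fin 3) (ZMod 2)}
    (hM : M.IsSymm) : IsLagrangian (AddSubgroup.closure (Set.range (dressedFlux M))) := by
  apply isLagrangian_closure
  · rintro _ ⟨s, rfl⟩ _ ⟨t, rfl⟩
    rw [ω_dressedFlux]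
    simp [dressedFlux, Pi.single_apply, hM.apply s t, CharTwo.add_self_eq_zero]
  · intro x hx
    have hx₁ : ∀ s, x.1 s = ∑ u, M s u * x.2 u := fun s => by
      simpa only [ω_dressedFlux, hM.apply, CharTwo.add_eq_zero] using hx _ ⟨s, rfl⟩
    have hx_eq : x = ∑ t, x.2 t • dressedFlux M t := by
      ext s
      · simp [dressedFlux, hx₁, Prod.fst_sum, Finset.sum_apply, mul_comm]
      · simp [dressedFlux, Prod.snd_sum, Finset.sum_apply, Pi.single_apply]
    rw [hx_eq]
    exact AddSubgroup.sum_mem _ fun t _ =>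
      (AddSubgroup.toZModSubmodule 2 (AddSubgroup.closure _)).smul_mem _
        (AddSubgroup.subset_closure (Set.mem_range_self t))

lemma dressedFlux_adjMatrix_edge_left {i j : Fin 3} (hij : i ≠ j) :
    dressedFlux ((SimpleGraph.edge i j).adjMatrix (ZMod 2)) i = m i + e j := by
  ext s
  · simp only [dressedFlux, SimpleGraph.adjMatrix_apply, SimpleGraph.edge_adj, e, m,
      Prod.fst_add, Pi.add_apply, Pi.zero_apply, zero_add, Pi.single_apply]
    grind
  · simp [dressedFlux, m, e]

lemma dressedFlux_adjMatrix_edge_right {i j : Fin 3} (hij : i ≠ j) :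
    dressedFlux ((SimpleGraph.edge i j).adjMatrix (ZMod 2)) j = m j + e i := by
  convert dressedFlux_adjMatrix_edge_left hij.symm using 3
  exact SimpleGraph.edge_comm i j

lemma dressedFlux_adjMatrix_edge_of_ne {i j k : Fin 3} (hki : k ≠ i) (hkj : k ≠ j) :
    dressedFlux ((SimpleGraph.edge i j).adjMatrix (ZMod 2)) k = m k := by
  ext s <;> simp [dressedFlux, m, SimpleGraph.edge_adj, hki, hkj]

lemma Fin.range_eq_of_pairwise_ne {α : Type*} (f : Fin 3 → α) {i j k : Fin 3}
    (hij : i ≠ j) (hjk : j ≠ k) (hik : i ≠ k) : Set.range f = {f i, f j, f k} := by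
  ext x
  simp only [Set.mem_range, Set.mem_insert_iff, Set.mem_singleton_iff]
  constructor
  · rintro ⟨t, rfl⟩
    have ht : t = i ∨ t = j ∨ t = k := by revert i j k t; decide
    rcases ht with rfl | rfl | rfl <;> simp
  · rintro (rfl | rfl | rfl) <;> exact ⟨_, rfl⟩

theorem stmt_7 (i j k : Fin 3) (hij : i ≠ j) (hjk : j ≠ k) (hik : i ≠ k) :
    IsLagrangian (AddSubgroup.closure {m i + e j, m j + e i, m k}) ∧
    IsLagrangian (AddSubgroup.closure
      {m 0 + e 1 + e 2, m 1 + e 0 + e 2, m 2 + e 0 + e 1}) := by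
  constructor
  · rw [← dressedFlux_adjMatrix_edge_left hij, ← dressedFlux_adjMatrix_edge_right hij,
      ← dressedFlux_adjMatrix_edge_of_ne hik.symm hjk.symm,
      ← Fin.range_eq_of_pairwise_ne _ hij hjk hik]
    exact isLagrangian_closure_range_dressedFlux (SimpleGraph.isSymm_adjMatrix _)
  · let M := (⊤ : SimpleGraph (Fin 3)).adjMatrix (ZMod 2)
    have h0 : dressedFlux M 0 = m 0 + e 1 + e 2 := by decide
    have h1 : dressedFlux M 1 = m 1 + e 0 + e 2 := by decide
    have h2 : dressedFlux M 2 = m 2 + e 0 + e 1 := by decide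
    rw [← h0, ← h1, ← h2, ← Fin.range_eq_of_pairwise_ne _ (by decide) (by decide) (by decide)]
    exact isLagrangian_closure_range_dressedFlux (SimpleGraph.isSymm_adjMatrix _)
end

section
/- For any distinct i, j, k ∈ {1,2,3}, the image under φⱼₖ of the subgroup of A generated by {eᵢ, mⱼ, mₖ} equals the subgroup generated by {eᵢ, mⱼ + eₖ, mₖ + eⱼ}, and this image is a different subgroup from the one generated by {eᵢ, mⱼ, mₖ}; i.e. the S-domain wall s⁽²⁾ⱼₖ does not condense on the (eᵢ, mⱼ, mₖ)-boundary but produces a nested boundary with condensation set (eᵢ, mⱼeₖ, mₖeⱼ). -/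
/-! `φ i j` is additive, so it carries the subgroup generated by a set onto the subgroup generated
by the image of that set; on the generators it fixes `eᵢ` and sends `mⱼ, mₖ` to `mⱼ + eₖ, mₖ + eⱼ`.
The two subgroups differ because the `eₖ`-coordinate of the electric part vanishes on `eᵢ, mⱼ, mₖ`
but not on `mⱼ + eₖ`. -/

lemma φ_add (i j : Fin 3) (x y : A) : φ i j (x + y) = φ i j x + φ i j y := by
  ext t <;> simp only [φ, Prod.fst_add, Prod.snd_add, Pi.add_apply, add_smul]
  ring

def φAddHom (i j : Fin 3) : A →+ A := AddMonoidHom.mk' (φ i j) (φ_add i j)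

lemma image_φ_closure (i j : Fin 3) (s : Set A) :
    φ i j '' (AddSubgroup.closure s : Set A) = AddSubgroup.closure (φ i j '' s) :=
  congrArg SetLike.coe ((φAddHom i j).map_closure s)

lemma φ_e (i j t : Fin 3) : φ i j (e t) = e t := by
  simp [φ, e]

lemma φ_m_left {i j : Fin 3} (hij : i ≠ j) : φ i j (m i) = m i + e j := by
  simp [φ, m, e, Pi.single_eq_of_ne hij.symm]

lemma φ_m_right {i j : Fin 3} (hij : i ≠ j) : φ i j (m j) = m j + e i := by
  simp [φ, m, e, Pi.single_eq_of_ne hij]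

def electricCoord (k : Fin 3) : A →+ ZMod 2 :=
  (Pi.evalAddMonoidHom (fun _ => ZMod 2) k).comp (AddMonoidHom.fst _ _)

lemma closure_le_ker_electricCoord {i k : Fin 3} (hik : i ≠ k) (j : Fin 3) :
    AddSubgroup.closure {e i, m j, m k} ≤ (electricCoord k).ker := by
  rw [AddSubgroup.closure_le]
  rintro x (rfl | rfl | rfl) <;>
    simp [electricCoord, e, m, Pi.single_eq_of_ne hik.symm]

lemma m_add_e_notMem_closure {i k : Fin 3} (hik : i ≠ k) (j : Fin 3) :
    m j + e k ∉ AddSubgroup.closure {e i, m j, m k} := fun hmem => by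
  simpa [electricCoord, e, m] using closure_le_ker_electricCoord hik j hmem

theorem stmt_9_general (i j k : Fin 3) (hjk : j ≠ k) (hik : i ≠ k) :
    φ j k '' ((AddSubgroup.closure {e i, m j, m k} : AddSubgroup A) : Set A) =
      ((AddSubgroup.closure {e i, m j + e k, m k + e j} : AddSubgroup A) : Set A) ∧
    AddSubgroup.closure {e i, m j + e k, m k + e j} ≠
      AddSubgroup.closure {e i, m j, m k} := by
  refine ⟨?_, fun h => m_add_e_notMem_closure hik j ?_⟩
  · rw [image_φ_closure, Set.image_insert_eq, Set.image_insert_eq, Set.image_singleton,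
      φ_e, φ_m_left hjk, φ_m_right hjk]
  · exact h ▸ AddSubgroup.subset_closure (by simp)

theorem stmt_9 (i j k : Fin 3) (hij : i ≠ j) (hjk : j ≠ k) (hik : i ≠ k) :
    φ j k '' ((AddSubgroup.closure {e i, m j, m k} : AddSubgroup A) : Set A) =
      ((AddSubgroup.closure {e i, m j + e k, m k + e j} : AddSubgroup A) : Set A) ∧
    AddSubgroup.closure {e i, m j + e k, m k + e j} ≠
      AddSubgroup.closure {e i, m j, m k} :=
  stmt_9_general i j k hjk hik
end
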